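/- For all a, b ∈ ℝ^n, the dimension of tconv(segment ℝ a b) — i.e., the rank (finrank over ℝ) of the direction of the affine span of tconv(segment ℝ a b) — equals the cardinality of the set {c ∈ ℝ : c ≠ 0 and a_i − b_i = c for some i} of distinct nonzero coordinates of a − b. -/

import Mathlib

/-- A set `U ⊆ ℝ^n` is tropically convex (min-plus convention). -/
def TropConvex {n : ℕ} (U : Set (Fin n → ℝ)) : Prop :=
  ∀ x ∈ U, ∀ y ∈ U, ∀ a b : ℝ, min a b = 0 →
    (fun i => min (a + x i) (b + y i)) ∈ U

/-- The tropical convex hull: the intersection of all tropically convex sets containing `U`. -/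
def tconv {n : ℕ} (U : Set (Fin n → ℝ)) : Set (Fin n → ℝ) :=
  ⋂₀ {V | TropConvex V ∧ U ⊆ V}

/-!
Write `d = a - b` and let `W` be the space of vectors `g ∘ d` with `g 0 = 0`. The coset `b + W` is
tropically convex and contains `a` and `b`, so the hull lies in it; `W` has as a basis the
indicator vectors of the fibres of `d` over its nonzero values. Conversely, each such indicator
is a rescaled second difference in `γ` of the hull points `min(a, γ + b)` (value `c > 0`), resp.
`min(γ + a, b)` (value `c < 0`), taken with a step `δ` smaller than the gap from `c` to the other
values of `d`.
-/

open Set Submodule Module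

theorem LinearIndepOn.finrank_span_image_eq_ncard {R M ι : Type*} [Ring R] [StrongRankCondition R]
    [AddCommGroup M] [Module R M] {v : ι → M} {s : Set ι} (hs : LinearIndepOn R v s) :
    finrank R (span R (v '' s)) = s.ncard := by
  rw [finrank, ← Cardinal.toNat_toENat, toENat_rank_span_set hs, Set.ncard_def]

theorem exists_pos_forall_eq_or_le_abs_sub {s : Set ℝ} (hs : s.Finite) (c : ℝ) {ε : ℝ}
    (hε : 0 < ε) : ∃ δ, 0 < δ ∧ δ ≤ ε ∧ ∀ t ∈ s, t = c ∨ δ ≤ |t - c| := by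
  obtain ⟨r, hr, hball⟩ :=
    Metric.isOpen_iff.1 (hs.sdiff (t := {c})).isClosed.isOpen_compl c (by simp)
  refine ⟨min ε r, lt_min hε hr, min_le_left ε r, fun t ht => or_iff_not_imp_left.2 fun htc => ?_⟩
  by_contra! h
  exact hball (by rw [Metric.mem_ball, Real.dist_eq]; linarith [min_le_right ε r]) ⟨ht, htc⟩

theorem min_second_difference {t c δ : ℝ} (hδ : 0 < δ) (h : t = c ∨ δ ≤ |t - c|) :
    (min t c - min t (c - δ)) - (min t (c + δ) - min t c) = if t = c then δ else 0 := by
  rcases h with rfl | h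
  · rw [min_self, min_eq_right (by linarith : t - δ ≤ t), min_eq_left (by linarith : t ≤ t + δ),
      if_pos rfl]
    ring
  have htc : t ≠ c := by rintro rfl; simp at h; linarith
  rw [if_neg htc]
  rcases le_abs'.1 h with h | h
  · rw [min_eq_left (by linarith), min_eq_left (by linarith), min_eq_left (by linarith)]
    ring
  · rw [min_eq_right (by linarith), min_eq_right (by linarith), min_eq_right (by linarith)]
    ring

section Fiber

variable {ι : Type*} (d : ι → ℝ)

noncomputable def fiberIndicator (c : ℝ) : ι → ℝ := fun i => if d i = c then 1 else 0

def fiberSubmodule : Submodule ℝ (ι → ℝ) :=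
  (LinearMap.ker (LinearMap.proj 0 : (ℝ → ℝ) →ₗ[ℝ] ℝ)).map (LinearMap.funLeft ℝ ℝ d)

variable {d}

theorem mem_fiberSubmodule {v : ι → ℝ} :
    v ∈ fiberSubmodule d ↔ ∃ g : ℝ → ℝ, g 0 = 0 ∧ v = g ∘ d := by
  simp [fiberSubmodule, LinearMap.funLeft, eq_comm]

theorem fiberIndicator_mem_fiberSubmodule {c : ℝ} (hc : c ≠ 0) :
    fiberIndicator d c ∈ fiberSubmodule d :=
  mem_fiberSubmodule.2 ⟨fun t => if t = c then 1 else 0, by simp [hc.symm], rfl⟩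

variable (d)

theorem fiberSubmodule_eq_span [Fintype ι] :
    fiberSubmodule d = span ℝ (fiberIndicator d '' (range d \ {0})) := by
  classical
  refine le_antisymm (fun v hv => ?_) (span_le.2 ?_)
  · obtain ⟨g, hg0, rfl⟩ := mem_fiberSubmodule.1 hv
    have hsum : g ∘ d = ∑ c ∈ Finset.univ.image d, g c • fiberIndicator d c := by
      ext i
      simp [fiberIndicator, Finset.sum_apply]
    rw [hsum]
    refine sum_mem fun c hc => ?_
    rcases eq_or_ne c 0 with rfl | hc0
    · simp [hg0]
    · exact smul_mem _ _ (subset_span ⟨c, ⟨by simpa using hc, hc0⟩, rfl⟩)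
  · rintro _ ⟨c, ⟨-, hc⟩, rfl⟩
    exact fiberIndicator_mem_fiberSubmodule hc

theorem linearIndepOn_fiberIndicator [Finite ι] :
    LinearIndepOn ℝ (fiberIndicator d) (range d) := by
  classical
  have hinj : Function.Injective (LinearMap.funLeft ℝ ℝ (rangeFactorization d)) :=
    LinearMap.funLeft_injective_of_surjective _ _ _ rangeFactorization_surjective
  have hfactor : (fun c : range d => fiberIndicator d c) =
      LinearMap.funLeft ℝ ℝ (rangeFactorization d) ∘ Pi.basisFun ℝ (range d) := by
    ext c i
    simp [fiberIndicator, Pi.single_apply, rangeFactorization, Subtype.ext_iff]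
  rw [LinearIndepOn, hfactor]
  exact (Pi.basisFun ℝ _).linearIndependent.map' _ (LinearMap.ker_eq_bot.2 hinj)

theorem finrank_fiberSubmodule [Fintype ι] :
    finrank ℝ (fiberSubmodule d) = (range d \ {0}).ncard := by
  rw [fiberSubmodule_eq_span,
    ((linearIndepOn_fiberIndicator d).mono sdiff_subset).finrank_span_image_eq_ncard]

end Fiber

section Tropical

variable {n : ℕ}

theorem tropConvex_tconv (U : Set (Fin n → ℝ)) : TropConvex (tconv U) :=
  fun _x hx _y hy α β hαβ _V hV => hV.1 _ (hx _ hV) _ (hy _ hV) α β hαβ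

theorem subset_tconv (U : Set (Fin n → ℝ)) : U ⊆ tconv U :=
  fun _x hx _V hV => hV.2 hx

theorem tconv_subset_of_tropConvex {U V : Set (Fin n → ℝ)} (hV : TropConvex V) (hUV : U ⊆ V) :
    tconv U ⊆ V :=
  sInter_subset_of_mem ⟨hV, hUV⟩

theorem tropConvex_mk'_fiberSubmodule (b d : Fin n → ℝ) :
    TropConvex (AffineSubspace.mk' b (fiberSubmodule d) : Set (Fin n → ℝ)) := by
  intro x hx y hy α β hαβ
  simp only [SetLike.mem_coe, AffineSubspace.mem_mk', vsub_eq_sub, mem_fiberSubmodule] at hx hy ⊢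
  obtain ⟨g, hg0, hg⟩ := hx
  obtain ⟨h, hh0, hh⟩ := hy
  refine ⟨fun t => min (α + g t) (β + h t), by simpa [hg0, hh0] using hαβ, funext fun i => ?_⟩
  have hxi := congrFun hg i
  have hyi := congrFun hh i
  simp only [Pi.sub_apply, Function.comp_apply] at hxi hyi ⊢
  rw [← min_sub_sub_right]
  congr 1 <;> linarith

theorem tconv_segment_subset_mk' (a b : Fin n → ℝ) :
    tconv (segment ℝ a b) ⊆ AffineSubspace.mk' b (fiberSubmodule (a - b)) := by
  have ha : a ∈ AffineSubspace.mk' b (fiberSubmodule (a - b)) := by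
    rw [AffineSubspace.mem_mk', vsub_eq_sub, mem_fiberSubmodule]
    exact ⟨id, rfl, rfl⟩
  exact tconv_subset_of_tropConvex (tropConvex_mk'_fiberSubmodule b (a - b))
    ((AffineSubspace.convex _).segment_subset ha (AffineSubspace.self_mem_mk' _ _))

theorem direction_affineSpan_tconv_segment_le (a b : Fin n → ℝ) :
    (affineSpan ℝ (tconv (segment ℝ a b))).direction ≤ fiberSubmodule (a - b) := by
  simpa using AffineSubspace.direction_le (affineSpan_le.2 (tconv_segment_subset_mk' a b))

variable {S : Set (Fin n → ℝ)} {a b : Fin n → ℝ}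

theorem fiberIndicator_mem_vectorSpan_of_pos (hS : TropConvex S) (ha : a ∈ S) (hb : b ∈ S)
    {c : ℝ} (hc : 0 < c) : fiberIndicator (a - b) c ∈ vectorSpan ℝ S := by
  set p : ℝ → Fin n → ℝ := fun γ i => min (0 + a i) (γ + b i)
  have hp_apply (γ : ℝ) (i : Fin n) : p γ i = min ((a - b) i) γ + b i := by
    simp [p, ← min_add_add_right]
  have hsub {γ γ' : ℝ} (hγ : 0 ≤ γ) (hγ' : 0 ≤ γ') : p γ - p γ' ∈ vectorSpan ℝ S :=
    vsub_mem_vectorSpan ℝ (hS a ha b hb 0 γ (min_eq_left hγ))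
      (hS a ha b hb 0 γ' (min_eq_left hγ'))
  obtain ⟨δ, hδ, hδc, hgap⟩ := exists_pos_forall_eq_or_le_abs_sub (finite_range (a - b)) c hc
  have hkey : fiberIndicator (a - b) c = δ⁻¹ • ((p c - p (c - δ)) - (p (c + δ) - p c)) := by
    funext i
    simp only [Pi.smul_apply, Pi.sub_apply, hp_apply, add_sub_add_right_eq_sub, smul_eq_mul]
    rw [← Pi.sub_apply, min_second_difference hδ (hgap _ (mem_range_self i)), fiberIndicator]
    split_ifs <;> simp [hδ.ne']
  rw [hkey]
  exact smul_mem _ _ (sub_mem (hsub hc.le (by linarith)) (hsub (by linarith) hc.le))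

theorem fiberIndicator_mem_vectorSpan (hS : TropConvex S) (ha : a ∈ S) (hb : b ∈ S)
    {c : ℝ} (hc : c ≠ 0) : fiberIndicator (a - b) c ∈ vectorSpan ℝ S := by
  rcases hc.lt_or_gt with hc | hc
  · have hswap : fiberIndicator (a - b) c = fiberIndicator (b - a) (-c) := by
      ext i
      simp only [fiberIndicator, Pi.sub_apply, ← neg_sub (a i), neg_inj]
    rw [hswap]
    exact fiberIndicator_mem_vectorSpan_of_pos hS hb ha (neg_pos.2 hc)
  · exact fiberIndicator_mem_vectorSpan_of_pos hS ha hb hc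

theorem fiberSubmodule_le_vectorSpan (hS : TropConvex S) (ha : a ∈ S) (hb : b ∈ S) :
    fiberSubmodule (a - b) ≤ vectorSpan ℝ S := by
  rw [fiberSubmodule_eq_span, span_le]
  rintro _ ⟨c, ⟨-, hc⟩, rfl⟩
  exact fiberIndicator_mem_vectorSpan hS ha hb hc

end Tropical

theorem dim_tconv_segment (n : ℕ) (a b : Fin n → ℝ) :
    Module.finrank ℝ (affineSpan ℝ (tconv (segment ℝ a b))).direction =
      {c : ℝ | c ≠ 0 ∧ ∃ i, a i - b i = c}.ncard := by
  have hdirection : (affineSpan ℝ (tconv (segment ℝ a b))).direction = fiberSubmodule (a - b) := by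
    refine le_antisymm (direction_affineSpan_tconv_segment_le a b) ?_
    rw [direction_affineSpan]
    exact fiberSubmodule_le_vectorSpan (tropConvex_tconv _)
      (subset_tconv _ (left_mem_segment ℝ a b)) (subset_tconv _ (right_mem_segment ℝ a b))
  have hvalues : {c : ℝ | c ≠ 0 ∧ ∃ i, a i - b i = c} = range (a - b) \ {0} := by
    ext c
    simp [and_comm]
  rw [hdirection, finrank_fiberSubmodule, hvalues]
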